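/- Let Q₁₁ and Q₂₂ be symmetric real n×n matrices, let Q₁₂ be an arbitrary real n×n matrix, and let Ψ be a symmetric positive definite n×n matrix. Suppose the 2n×2n block matrix K with (1,1)-block Q₁₁ − Ψ, (1,2)-block Q₁₂ + (1/2)Ψ, (2,1)-block (Q₁₂ + (1/2)Ψ)ᵀ, and (2,2)-block Q₂₂ has negative definite quadratic form, i.e. zᵀKz < 0 for all nonzero z ∈ ℝ^{2n}. Then for every α ∈ [0,1], the symmetric matrix α²·Q₁₁ + α·(Q₁₂ + Q₁₂ᵀ) + Q₂₂ is negative definite. -/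

import Mathlib

open Matrix

theorem sumElim_dotProduct_fromBlocks_mulVec_sumElim {m n R : Type*} [Fintype m] [Fintype n]
    [CommSemiring R] (A : Matrix m m R) (B : Matrix m n R) (C : Matrix n m R)
    (D : Matrix n n R) (u : m → R) (v : n → R) :
    Sum.elim u v ⬝ᵥ fromBlocks A B C D *ᵥ Sum.elim u v =
      u ⬝ᵥ A *ᵥ u + u ⬝ᵥ B *ᵥ v + v ⬝ᵥ C *ᵥ u + v ⬝ᵥ D *ᵥ v := by
  rw [fromBlocks_mulVec, Sum.elim_comp_inl, Sum.elim_comp_inr, sumElim_dotProduct_sumElim,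
    dotProduct_add, dotProduct_add]
  ring

/-- Along `z = (a x, x)` the block matrix splits into the interpolated matrix plus the multiplier
term `a (1 - a) xᵀΨx` of the constraint `a (1 - a) ≥ 0`. -/
theorem sumElim_smul_dotProduct_fromBlocks_mulVec {ι R : Type*} [Fintype ι] [Field R]
    [NeZero (2 : R)] (Q₁₁ Q₂₂ Q₁₂ Ψ : Matrix ι ι R) (a : R) (x : ι → R) :
    Sum.elim (a • x) x ⬝ᵥ
        fromBlocks (Q₁₁ - Ψ) (Q₁₂ + (1/2 : R) • Ψ) (Q₁₂ + (1/2 : R) • Ψ)ᵀ Q₂₂ *ᵥ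
          Sum.elim (a • x) x =
      x ⬝ᵥ (a ^ 2 • Q₁₁ + a • (Q₁₂ + Q₁₂ᵀ) + Q₂₂) *ᵥ x + a * (1 - a) * (x ⬝ᵥ Ψ *ᵥ x) := by
  rw [sumElim_dotProduct_fromBlocks_mulVec_sumElim]
  simp only [transpose_add, transpose_smul, add_mulVec, sub_mulVec, smul_mulVec, mulVec_smul,
    dotProduct_add, dotProduct_sub, dotProduct_smul, smul_dotProduct, smul_eq_mul,
    dotProduct_transpose_mulVec]
  field_simp
  ring

theorem s_procedure_alpha_general {n : ℕ} (Q₁₁ Q₂₂ Q₁₂ Ψ : Matrix (Fin n) (Fin n) ℝ)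
    (hΨpos : ∀ x : Fin n → ℝ, x ≠ 0 → 0 < x ⬝ᵥ Ψ.mulVec x)
    (hK : ∀ z : Fin n ⊕ Fin n → ℝ, z ≠ 0 →
      z ⬝ᵥ (Matrix.fromBlocks (Q₁₁ - Ψ) (Q₁₂ + (1/2 : ℝ) • Ψ)
        ((Q₁₂ + (1/2 : ℝ) • Ψ)ᵀ) Q₂₂).mulVec z < 0) :
    ∀ α : ℝ, α ∈ Set.Icc (0 : ℝ) 1 →
      ∀ x : Fin n → ℝ, x ≠ 0 →
        x ⬝ᵥ ((α ^ 2) • Q₁₁ + α • (Q₁₂ + Q₁₂ᵀ) + Q₂₂).mulVec x < 0 := by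
  rintro α ⟨hα₀, hα₁⟩ x hx
  have hz : Sum.elim (α • x) x ≠ 0 := fun h => hx (by simpa using congrArg (· ∘ Sum.inr) h)
  have hKz := hK _ hz
  rw [sumElim_smul_dotProduct_fromBlocks_mulVec] at hKz
  have hmultiplier : 0 ≤ α * (1 - α) * (x ⬝ᵥ Ψ *ᵥ x) :=
    mul_nonneg (mul_nonneg hα₀ (sub_nonneg.2 hα₁)) (hΨpos x hx).le
  linarith

/-- **S-procedure over the interpolation variable `α ∈ [0,1]`.**
If the block matrix `K = [[Q₁₁ - Ψ, Q₁₂ + (1/2)Ψ], [(Q₁₂ + (1/2)Ψ)ᵀ, Q₂₂]]` has negative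
definite quadratic form, then `α² Q₁₁ + α (Q₁₂ + Q₁₂ᵀ) + Q₂₂` is negative definite for
every `α ∈ [0,1]`. -/
theorem s_procedure_alpha {n : ℕ} (Q₁₁ Q₂₂ Q₁₂ Ψ : Matrix (Fin n) (Fin n) ℝ)
    (hQ₁₁ : Q₁₁.IsSymm) (hQ₂₂ : Q₂₂.IsSymm) (hΨsymm : Ψ.IsSymm)
    (hΨpos : ∀ x : Fin n → ℝ, x ≠ 0 → 0 < x ⬝ᵥ Ψ.mulVec x)
    (hK : ∀ z : Fin n ⊕ Fin n → ℝ, z ≠ 0 →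
      z ⬝ᵥ (Matrix.fromBlocks (Q₁₁ - Ψ) (Q₁₂ + (1/2 : ℝ) • Ψ)
        ((Q₁₂ + (1/2 : ℝ) • Ψ)ᵀ) Q₂₂).mulVec z < 0) :
    ∀ α : ℝ, α ∈ Set.Icc (0 : ℝ) 1 →
      ∀ x : Fin n → ℝ, x ≠ 0 →
        x ⬝ᵥ ((α ^ 2) • Q₁₁ + α • (Q₁₂ + Q₁₂ᵀ) + Q₂₂).mulVec x < 0 :=
  s_procedure_alpha_general Q₁₁ Q₂₂ Q₁₂ Ψ hΨpos hK
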